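/- The eight 5×5 complex matrices diagonal(v₁), diagonal(v₂), diagonal(v₃), diagonal(v₄), B(v₁), B(v₂), B(v₃), B(v₄) pairwise commute, and the set of all complex linear combinations of these eight matrices is closed under multiplication; that is, this span is a commutative subring of the 5×5 complex matrices. -/

import Mathlib

/-!
The four vectors are palindromic (`v ∘ Fin.rev = v`) and form a group under pointwise
multiplication (a Klein four-group: `v₂ * v₄ = v₃`, each squares to `v₁`). Multiplying diagonal
and secondary-diagonal matrices only multiplies their vectors, after reversing the right-hand one
when the left factor is secondary; for palindromic vectors the reversal is invisible, so the eight
matrices form a commutative multiplicative set, and its linear span inherits both properties.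
-/

open Matrix

/-- The secondary-diagonal (anti-diagonal) matrix with entries `v i` at `(i, Fin.rev i)`. -/
def secondary {n : ℕ} (v : Fin n → ℂ) : Matrix (Fin n) (Fin n) ℂ :=
  Matrix.of fun i j => if j = Fin.rev i then v i else 0

section SpanOfMultiplicativeSet

variable {R A : Type*} [CommSemiring R] [Semiring A] [Algebra R A] {S : Set A} {x y : A}

theorem Submodule.mul_mem_span_of_mul_mem (hS : ∀ a ∈ S, ∀ b ∈ S, a * b ∈ S)
    (hx : x ∈ Submodule.span R S) (hy : y ∈ Submodule.span R S) : x * y ∈ Submodule.span R S := by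
  have hxy := Submodule.mul_mem_mul hx hy
  rw [Submodule.span_mul_span] at hxy
  exact Submodule.span_mono (Set.mul_subset_iff.2 hS) hxy

theorem Submodule.mul_comm_of_mem_span (hS : ∀ a ∈ S, ∀ b ∈ S, a * b = b * a)
    (hx : x ∈ Submodule.span R S) (hy : y ∈ Submodule.span R S) : x * y = y * x :=
  have hspan : Submodule.span R S ≤
      Subalgebra.toSubmodule (Subalgebra.centralizer R (Set.centralizer S)) :=
    (Algebra.span_le_adjoin R S).trans (Algebra.adjoin_le_centralizer_centralizer R S)
  Set.centralizer_centralizer_comm_of_comm hS x (hspan hx) y (hspan hy)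

end SpanOfMultiplicativeSet

section Secondary

variable {n : ℕ}

theorem diagonal_mul_secondary (v w : Fin n → ℂ) :
    diagonal v * secondary w = secondary (v * w) := by
  ext i j
  simp [secondary, diagonal_mul, mul_ite]

theorem secondary_mul_diagonal (v w : Fin n → ℂ) :
    secondary v * diagonal w = secondary (v * (w ∘ Fin.rev)) := by
  ext i j
  by_cases h : j = Fin.rev i
  · subst h; simp [secondary]
  · simp [secondary, h]

theorem secondary_mul_secondary (v w : Fin n → ℂ) :
    secondary v * secondary w = diagonal (v * (w ∘ Fin.rev)) := by
  ext i j
  rw [mul_apply, Finset.sum_eq_single (Fin.rev i)]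
  · by_cases h : i = j
    · subst h; simp [secondary]
    · simp [secondary, h, Ne.symm h]
  · intro k _ hk
    simp [secondary, hk]
  · simp

def diagSecondary (V : Set (Fin n → ℂ)) : Set (Matrix (Fin n) (Fin n) ℂ) :=
  diagonal '' V ∪ secondary '' V

variable {V : Set (Fin n → ℂ)} (hpal : ∀ v ∈ V, v ∘ Fin.rev = v)
include hpal

theorem mul_mem_diagSecondary (hV : ∀ v ∈ V, ∀ w ∈ V, v * w ∈ V) :
    ∀ M ∈ diagSecondary V, ∀ N ∈ diagSecondary V, M * N ∈ diagSecondary V := by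
  intro M hM N hN
  rcases hM with ⟨v, hv, rfl⟩ | ⟨v, hv, rfl⟩ <;> rcases hN with ⟨w, hw, rfl⟩ | ⟨w, hw, rfl⟩
  · exact Or.inl ⟨v * w, hV v hv w hw, (diagonal_mul_diagonal v w).symm⟩
  · exact Or.inr ⟨v * w, hV v hv w hw, (diagonal_mul_secondary v w).symm⟩
  · exact Or.inr ⟨v * w, hV v hv w hw, by rw [secondary_mul_diagonal, hpal w hw]⟩
  · exact Or.inl ⟨v * w, hV v hv w hw, by rw [secondary_mul_secondary, hpal w hw]⟩

theorem mul_comm_of_mem_diagSecondary :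
    ∀ M ∈ diagSecondary V, ∀ N ∈ diagSecondary V, M * N = N * M := by
  intro M hM N hN
  rcases hM with ⟨v, hv, rfl⟩ | ⟨v, hv, rfl⟩ <;> rcases hN with ⟨w, hw, rfl⟩ | ⟨w, hw, rfl⟩ <;>
    simp only [diagonal_mul_diagonal, ← Pi.mul_def, diagonal_mul_secondary, secondary_mul_diagonal,
      secondary_mul_secondary, hpal v hv, hpal w hw, mul_comm v w]

end Secondary

def kleinVectors : Set (Fin 5 → ℂ) :=
  {![1, 1, 1, 1, 1], ![-1, 1, 1, 1, -1], ![-1, -1, 1, -1, -1], ![1, -1, 1, -1, 1]}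

theorem rev_comp_of_mem_kleinVectors : ∀ v ∈ kleinVectors, v ∘ Fin.rev = v := by
  simp only [kleinVectors, Set.mem_insert_iff, Set.mem_singleton_iff]
  rintro v (rfl | rfl | rfl | rfl) <;> ext i <;> fin_cases i <;> rfl

theorem mul_mem_kleinVectors : ∀ v ∈ kleinVectors, ∀ w ∈ kleinVectors, v * w ∈ kleinVectors := by
  simp only [kleinVectors, Set.mem_insert_iff, Set.mem_singleton_iff]
  rintro v (rfl | rfl | rfl | rfl) w (rfl | rfl | rfl | rfl) <;>
    simp [funext_iff, Fin.forall_fin_succ]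

theorem stmt_18 :
    let v1 : Fin 5 → ℂ := ![1, 1, 1, 1, 1]
    let v2 : Fin 5 → ℂ := ![-1, 1, 1, 1, -1]
    let v3 : Fin 5 → ℂ := ![-1, -1, 1, -1, -1]
    let v4 : Fin 5 → ℂ := ![1, -1, 1, -1, 1]
    let S : Set (Matrix (Fin 5) (Fin 5) ℂ) :=
      {Matrix.diagonal v1, Matrix.diagonal v2, Matrix.diagonal v3, Matrix.diagonal v4,
       secondary v1, secondary v2, secondary v3, secondary v4}
    (∀ M ∈ S, ∀ N ∈ S, M * N = N * M) ∧
    (∀ x ∈ Submodule.span ℂ S, ∀ y ∈ Submodule.span ℂ S,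
      x * y ∈ Submodule.span ℂ S ∧ x * y = y * x) := by
  intro v1 v2 v3 v4 S
  have hS : S = diagSecondary kleinVectors := by
    ext M
    simp only [S, diagSecondary, kleinVectors, Set.image_insert_eq, Set.image_singleton]
    simp only [Set.mem_union, Set.mem_insert_iff, Set.mem_singleton_iff]
    tauto
  have hmul := mul_mem_diagSecondary rev_comp_of_mem_kleinVectors mul_mem_kleinVectors
  have hcomm := mul_comm_of_mem_diagSecondary rev_comp_of_mem_kleinVectors
  rw [hS]
  exact ⟨hcomm, fun x hx y hy =>
    ⟨Submodule.mul_mem_span_of_mul_mem hmul hx hy, Submodule.mul_comm_of_mem_span hcomm hx hy⟩⟩
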